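/- arXiv:1501.02109 — 3 statements merged into one kernel-verified Lean document; each statement's English description precedes it below -/
import Mathlib

section
/- Let n ∈ ℕ, S = n/2, and P, M ≥ 0. Define f(t) = Σ_{a=−S}^{S} e^{at}, where the index a runs over the n+1 values −S, −S+1, …, S (increasing in integer steps), and define z̃(P,M) = ¼·Σ_{a=−S}^{S−1} ( S(S+1) − a(a+1) )·[ e^{(a+1)P + aM} + e^{aP + (a+1)M} ], where the index a runs over the n values −S, −S+1, …, S−1 (increasing in integer steps). Then z̃(P,M) ≤ (1/6)·S·(S+1)·(2S+1)·f(P+M)·( e^{−P} + e^{−M} ); in particular z̃(P,M)/f(P+M) ≤ (1/3)·S·(S+1)·(2S+1)·max(e^{−P}, e^{−M}). -/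
/-!
Every exponent occurring in `z̃` is at most `S (P + M) - M` or `S (P + M) - P` (this needs
`P + M ≥ 0`), so `z̃ ≤ ¼ (∑ weights) e^{S(P+M)} (e^{-P} + e^{-M})`. With `S = n/2` the weight of
index `k` is `(k+1)(n-k)`, and these sum to `n(n+1)(n+2)/6 = ⅔ S(S+1)(2S+1)`. Finally
`e^{S(P+M)}` is the top term of `f(P+M)`.
-/

open Finset Real

lemma sum_range_cast_add_one (n : ℕ) : ∑ k ∈ range n, ((k : ℝ) + 1) = n * (n + 1) / 2 := by
  induction n with
  | zero => simp
  | succ n ih => rw [sum_range_succ, ih]; push_cast; ring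

lemma sum_range_cast_add_one_mul_sub (n : ℕ) :
    ∑ k ∈ range n, ((k : ℝ) + 1) * (n - k) = n * (n + 1) * (n + 2) / 6 := by
  induction n with
  | zero => simp
  | succ n ih =>
    have hsplit : ∑ k ∈ range n, ((k : ℝ) + 1) * ((n + 1 : ℕ) - k)
        = ∑ k ∈ range n, ((k : ℝ) + 1) * (n - k) + ∑ k ∈ range n, ((k : ℝ) + 1) := by
      rw [← sum_add_distrib]; exact sum_congr rfl fun k _ => by push_cast; ring
    rw [sum_range_succ, hsplit, ih, sum_range_cast_add_one]; push_cast; ring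

section

variable {n : ℕ} {S : ℝ}

lemma spin_weight_eq (hS : S = n / 2) (k : ℝ) :
    S * (S + 1) - (k - S) * ((k - S) + 1) = (k + 1) * (n - k) := by
  subst hS; ring

lemma sum_spin_weight (hS : S = n / 2) :
    ∑ k ∈ range n, (S * (S + 1) - ((k : ℝ) - S) * (((k : ℝ) - S) + 1))
      = (2 / 3) * S * (S + 1) * (2 * S + 1) := by
  simp only [spin_weight_eq hS, sum_range_cast_add_one_mul_sub]
  subst hS; ring

lemma cast_sub_add_one_le_of_mem_range (hS : S = n / 2) {k : ℕ} (hk : k ∈ range n) :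
    (k : ℝ) - S + 1 ≤ S := by
  have hkn : (k : ℝ) + 1 ≤ n := by exact_mod_cast mem_range.mp hk
  rw [hS] at *; linarith

lemma spin_weight_nonneg (hS : S = n / 2) {k : ℕ} (hk : k ∈ range n) :
    0 ≤ S * (S + 1) - ((k : ℝ) - S) * (((k : ℝ) - S) + 1) := by
  have hkn : (k : ℝ) + 1 ≤ n := by exact_mod_cast mem_range.mp hk
  rw [spin_weight_eq hS]
  exact mul_nonneg (by positivity) (by linarith)

lemma exp_le_sum_range_exp (hS : S = n / 2) (t : ℝ) :
    exp (S * t) ≤ ∑ k ∈ range (n + 1), exp (((k : ℝ) - S) * t) := by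
  have htop : (n : ℝ) - S = S := by rw [hS]; ring
  simpa [htop] using single_le_sum (f := fun k : ℕ => exp (((k : ℝ) - S) * t))
    (fun _ _ => (exp_pos _).le) (self_mem_range_succ n)

end

lemma exp_add_one_mul_add_mul_le {P M a S : ℝ} (hPM : 0 ≤ P + M) (ha : a + 1 ≤ S) :
    exp ((a + 1) * P + a * M) ≤ exp (S * (P + M)) * exp (-M) := by
  rw [← exp_add, exp_le_exp]
  nlinarith [mul_le_mul_of_nonneg_right ha hPM]

lemma exp_pair_le {P M a S : ℝ} (hPM : 0 ≤ P + M) (ha : a + 1 ≤ S) :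
    exp ((a + 1) * P + a * M) + exp (a * P + (a + 1) * M)
      ≤ exp (S * (P + M)) * (exp (-P) + exp (-M)) := by
  have hMP := exp_add_one_mul_add_mul_le (add_comm P M ▸ hPM) ha
  rw [add_comm M P, add_comm ((a + 1) * M)] at hMP
  linarith [exp_add_one_mul_add_mul_le hPM ha]

lemma ztilde_le {n : ℕ} {S P M : ℝ} (hS : S = n / 2) (hPM : 0 ≤ P + M) :
    (1 / 4) * ∑ k ∈ range n,
        (S * (S + 1) - ((k : ℝ) - S) * (((k : ℝ) - S) + 1)) *
          (exp ((((k : ℝ) - S) + 1) * P + ((k : ℝ) - S) * M)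
            + exp (((k : ℝ) - S) * P + (((k : ℝ) - S) + 1) * M))
      ≤ (1 / 6) * S * (S + 1) * (2 * S + 1) * exp (S * (P + M)) * (exp (-P) + exp (-M)) := by
  calc _ ≤ (1 / 4) * ∑ k ∈ range n, (S * (S + 1) - ((k : ℝ) - S) * (((k : ℝ) - S) + 1))
          * (exp (S * (P + M)) * (exp (-P) + exp (-M))) :=
        mul_le_mul_of_nonneg_left (sum_le_sum fun k hk => mul_le_mul_of_nonneg_left
          (exp_pair_le hPM (cast_sub_add_one_le_of_mem_range hS hk))
          (spin_weight_nonneg hS hk)) (by norm_num)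
    _ = _ := by rw [← sum_mul, sum_spin_weight hS]; ring

/-- with `S = n/2`, `P, M ≥ 0`, `f(t) = ∑_{a=-S}^{S} e^{at}` (the index `a`
running over the `n+1` values `-S, …, S`) and
`z̃(P,M) = ¼ ∑_{a=-S}^{S-1} (S(S+1) − a(a+1)) (e^{(a+1)P + aM} + e^{aP + (a+1)M})`
(the index `a` running over the `n` values `-S, …, S-1`), one has
`z̃(P,M) ≤ (1/6)·S·(S+1)·(2S+1)·f(P+M)·(e^{−P} + e^{−M})` and in particular
`z̃(P,M)/f(P+M) ≤ (1/3)·S·(S+1)·(2S+1)·max(e^{−P}, e^{−M})`. -/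
theorem activity_ratio_bound (n : ℕ) (S : ℝ) (hS : S = n / 2)
    (P M : ℝ) (hP : 0 ≤ P) (hM : 0 ≤ M)
    (f : ℝ → ℝ)
    (hf : ∀ t : ℝ, f t = ∑ k ∈ Finset.range (n + 1), Real.exp (((k : ℝ) - S) * t))
    (ztilde : ℝ)
    (hz : ztilde = (1 / 4) * ∑ k ∈ Finset.range n,
        (S * (S + 1) - ((k : ℝ) - S) * (((k : ℝ) - S) + 1)) *
          (Real.exp ((((k : ℝ) - S) + 1) * P + ((k : ℝ) - S) * M)
            + Real.exp (((k : ℝ) - S) * P + (((k : ℝ) - S) + 1) * M))) :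
    ztilde ≤ (1 / 6) * S * (S + 1) * (2 * S + 1) * f (P + M)
        * (Real.exp (-P) + Real.exp (-M))
    ∧ ztilde / f (P + M)
        ≤ (1 / 3) * S * (S + 1) * (2 * S + 1) * max (Real.exp (-P)) (Real.exp (-M)) := by
  have hS0 : 0 ≤ S := by rw [hS]; positivity
  have hf_ge : exp (S * (P + M)) ≤ f (P + M) := hf _ ▸ exp_le_sum_range_exp hS _
  have hz_le : ztilde ≤ (1 / 6) * S * (S + 1) * (2 * S + 1) * f (P + M)
      * (exp (-P) + exp (-M)) := by
    rw [hz]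
    refine (ztilde_le hS (add_nonneg hP hM)).trans ?_
    gcongr
  refine ⟨hz_le, ?_⟩
  rw [div_le_iff₀ ((exp_pos _).trans_le hf_ge)]
  calc ztilde ≤ (1 / 6) * S * (S + 1) * (2 * S + 1) * f (P + M) * (exp (-P) + exp (-M)) := hz_le
    _ ≤ (1 / 6) * S * (S + 1) * (2 * S + 1) * f (P + M)
          * (2 * max (exp (-P)) (exp (-M))) := by
        have hf_nonneg := (exp_pos _).le.trans hf_ge
        gcongr
        linarith [le_max_left (exp (-P)) (exp (-M)), le_max_right (exp (-P)) (exp (-M))]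
    _ = _ := by ring
end

section
/- Let N ≥ 1 be an integer and q ∈ [0,1]. Let μ be the probability measure on {0,1}^N that assigns mass 1−q to the all-ones configuration and mass q to the all-zeros configuration, and let ν be the product measure on {0,1}^N under which the coordinates are i.i.d. Bernoulli with ν(coordinate = 1) = 1 − q^{1/N}. Then μ stochastically dominates ν: for every function F : {0,1}^N → ℝ that is nondecreasing with respect to the coordinatewise partial order, ∫ F dν ≤ ∫ F dμ. -/
/-! Under the product measure the all-zeros configuration has mass `(q^{1/N})^N = q`, exactly as
under the fully correlated measure. The remaining mass `1 - q` sits, for the fully correlated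
measure, on the top configuration, where a nondecreasing `F` is largest. -/

open Finset

theorem sum_mul_le_mul_add_mul_top {α : Type*} [Fintype α] [DecidableEq α] [Preorder α]
    [OrderTop α] {w F : α → ℝ} (hw : ∀ x, 0 ≤ w x) (hw_sum : ∑ x, w x = 1) (hF : Monotone F)
    (a : α) : ∑ x, w x * F x ≤ w a * F a + (1 - w a) * F ⊤ := by
  have h_rest : ∑ x ∈ univ.erase a, w x = 1 - w a := by
    rw [← hw_sum, ← add_sum_erase _ w (mem_univ a), add_sub_cancel_left]
  rw [← add_sum_erase _ _ (mem_univ a), ← h_rest, sum_mul]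
  exact add_le_add_right (sum_le_sum fun x _ => mul_le_mul_of_nonneg_left (hF le_top) (hw x)) _

theorem sum_prod_ite_bool {ι R : Type*} [Fintype ι] [DecidableEq ι] [CommSemiring R] (a b : R) :
    ∑ ξ : ι → Bool, ∏ k, (if ξ k then a else b) = (a + b) ^ Fintype.card ι :=
  (Fintype.prod_sum fun _ (c : Bool) => if c then a else b).symm.trans (by simp)

/-- the measure on `{0,1}^N` putting mass `1−q` on the all-ones
configuration and mass `q` on the all-zeros configuration stochastically dominates the
product of i.i.d. Bernoulli measures with success probability `1 − q^{1/N}`: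
for every nondecreasing `F : {0,1}^N → ℝ` (coordinatewise order, `true = 1 ≥ 0 = false`),
`∫ F dν = ∑_ξ (∏_k weight) F(ξ) ≤ q·F(all zeros) + (1−q)·F(all ones) = ∫ F dμ`. -/
theorem iid_dominated_by_fully_correlated
    (N : ℕ) (hN : 1 ≤ N) (q : ℝ) (hq0 : 0 ≤ q) (hq1 : q ≤ 1)
    (F : (Fin N → Bool) → ℝ) (hF : Monotone F) :
    ∑ ξ : Fin N → Bool,
        (∏ k : Fin N, if ξ k then 1 - q ^ ((N : ℝ)⁻¹) else q ^ ((N : ℝ)⁻¹)) * F ξ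
      ≤ q * F (fun _ => false) + (1 - q) * F (fun _ => true) := by
  set p := q ^ ((N : ℝ)⁻¹)
  have hp0 : 0 ≤ p := Real.rpow_nonneg hq0 _
  have hp1 : p ≤ 1 := Real.rpow_le_one hq0 hq1 (by positivity)
  have h_zeros : ∏ _k : Fin N, (if false then 1 - p else p) = q := by
    simpa using Real.rpow_inv_natCast_pow hq0 (by omega : N ≠ 0)
  have h_nonneg (ξ : Fin N → Bool) : 0 ≤ ∏ k, (if ξ k then 1 - p else p) :=
    prod_nonneg fun k _ => by split <;> linarith
  have h_total : ∑ ξ : Fin N → Bool, ∏ k, (if ξ k then 1 - p else p) = 1 := by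
    simp [sum_prod_ite_bool]
  simpa only [h_zeros, Pi.top_def, top_eq_true] using
    sum_mul_le_mul_add_mul_top h_nonneg h_total hF (fun _ => false)
end

section
/- There exists κ > 0, depending only on the dimension d, such that for every p > 1 − κ there exist constants φ > 0 and c₁, c₂ > 0, depending only on p and d, such that for every integer N ≥ 1 and every x ∈ A: P( T(x) < φ‖x‖₁ ) ≤ c₁ e^{−c₂‖x‖₁}. Here the probability is over an i.i.d. family η = (η(i))_{i∈Ξ} of {0,1}-valued random variables with P(η(i)=1) = p, and the constants are uniform in N. -/
open MeasureTheory
open scoped ENNReal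

/-- The even sublattice `A = {x ∈ ℤ^d : x₁ + ⋯ + x_d even}`. -/
def EvenLattice (d : ℕ) : Type := {x : Fin d → ℤ // Even (∑ i, x i)}

instance (d : ℕ) : DecidableEq (EvenLattice d) := fun x y =>
  decidable_of_iff _ Subtype.ext_iff.symm

/-- Adjacency (next-nearest neighbours) on the even sublattice:
`y = x ± e_i ± e_j`, i.e. `x ≠ y` and `∑ i |x_i − y_i| = 2`. -/
def adjA {d : ℕ} (x y : EvenLattice d) : Prop :=
  x ≠ y ∧ (∑ i, |x.1 i - y.1 i|) = 2

/-- Adjacency on `Ξ = A × ℤ/Nℤ`: either the same site and time-indices differing by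
`±1 (mod N)`, or the same time-index and adjacent sites. -/
def adjXi {d N : ℕ} (i j : EvenLattice d × ZMod N) : Prop :=
  (i.1 = j.1 ∧ (j.2 = i.2 + 1 ∨ j.2 = i.2 - 1)) ∨ (i.2 = j.2 ∧ adjA i.1 j.1)

/-- The origin of the even sublattice. -/
def originA (d : ℕ) : EvenLattice d := ⟨fun _ => 0, by simp⟩

/-- The passage time from the origin `(0,0)` to `(x,0)`: the infimum over all finite
paths `π` in the graph `Ξ` of the sum of `η` over all vertices visited by `π`. -/
noncomputable def passageTime {d N : ℕ} (η : EvenLattice d × ZMod N → Bool)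
    (x : EvenLattice d) : ℝ≥0∞ :=
  ⨅ (m : ℕ) (π : Fin (m + 1) → EvenLattice d × ZMod N)
    (_ : π 0 = (originA d, 0)) (_ : π (Fin.last m) = (x, 0))
    (_ : ∀ j : Fin m, adjXi (π j.castSucc) (π j.succ)),
    ∑ i ∈ Finset.image π Finset.univ, (if η i then 1 else 0 : ℝ≥0∞)

/-!
Peierls-type path counting. If `T(x) < ‖x‖₁ / 4`, the sites visited by an optimal path contain a
self-avoiding path from the origin to `x`; as an edge moves the `ℓ¹`-distance by at most `2`, its
length `m` is at least `‖x‖₁ / 2`, and more than half of its `m + 1` distinct sites have `η = 0`.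
Such a path is the trace of a word of `m` moves from an alphabet of size `D` independent of `N`,
and a set of `m / 2 + 1` of its sites can be chosen in at most `2 ^ (m + 1)` ways, so the
probability is at most `∑_{m ≥ ‖x‖₁ / 2} D ^ m 2 ^ (m + 1) (1 - p) ^ (m / 2 + 1)`, a geometric
tail as soon as `16 D² (1 - p) ≤ 1`.
-/

open Finset

theorem pow_mul_two_pow_mul_pow_half_le {D : ℕ} (hD : 0 < D) {q : ℝ} (hq0 : 0 ≤ q)
    (hq : 16 * D ^ 2 * q ≤ 1) (m : ℕ) :
    (D : ℝ) ^ m * 2 ^ (m + 1) * q ^ (m / 2 + 1) ≤ 2⁻¹ ^ m := by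
  set b : ℝ := (4 * D)⁻¹
  have hD1 : (1 : ℝ) ≤ D := Nat.one_le_cast.mpr hD
  have hb0 : 0 ≤ b := by positivity
  have hb4 : b ≤ 4⁻¹ := inv_anti₀ (by norm_num) (by linarith)
  have hqb : q ≤ b ^ 2 := by
    rw [inv_pow, ← one_div, le_div_iff₀ (by positivity)]
    linarith
  have h2Db : 2 * D * b = 2⁻¹ := by
    simp only [b]
    field_simp
    norm_num
  clear_value b
  calc (D : ℝ) ^ m * 2 ^ (m + 1) * q ^ (m / 2 + 1)
      ≤ (D : ℝ) ^ m * 2 ^ (m + 1) * (b ^ 2) ^ (m / 2 + 1) := by gcongr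
    _ ≤ (D : ℝ) ^ m * 2 ^ (m + 1) * b ^ (m + 1) := by
        rw [← pow_mul]
        exact mul_le_mul_of_nonneg_left (pow_le_pow_of_le_one hb0 (by linarith) (by omega))
          (by positivity)
    _ = (2 * D * b) ^ m * (2 * b) := by ring
    _ ≤ 2⁻¹ ^ m := by
        rw [h2Db]
        exact mul_le_of_le_one_right (by positivity) (by linarith)

theorem two_mul_inv_two_pow_le_ofReal_exp {L : ℕ} {y : ℝ} (hy : y ≤ 2 * L) :
    (2 : ℝ≥0∞) * 2⁻¹ ^ L ≤ ENNReal.ofReal (2 * Real.exp (-(Real.log 2 / 2) * y)) := by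
  have hexp : (2⁻¹ : ℝ) ^ L = Real.exp (-(Real.log 2 / 2) * (2 * L)) := by
    rw [show -(Real.log 2 / 2) * (2 * L) = L * -Real.log 2 by ring, Real.exp_nat_mul,
      Real.exp_neg, Real.exp_log two_pos]
  have hlog : 0 < Real.log 2 := Real.log_pos one_lt_two
  rw [← ENNReal.ofReal_ofNat 2, ← ENNReal.ofReal_inv_of_pos two_pos,
    ← ENNReal.ofReal_pow (by norm_num), ← ENNReal.ofReal_mul zero_le_two, hexp]
  refine ENNReal.ofReal_le_ofReal (mul_le_mul_of_nonneg_left (Real.exp_le_exp.mpr ?_) zero_le_two)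
  nlinarith

theorem Finset.card_filter_eq_true_add_card_filter_eq_false {α : Type*} (s : Finset α)
    (η : α → Bool) : #{i ∈ s | η i = true} + #{i ∈ s | η i = false} = #s := by
  simpa only [Bool.not_eq_true] using card_filter_add_card_filter_not (s := s) (η · = true)

theorem MeasureTheory.measure_biUnion_powersetCard_le {α : Type*} (P : Measure (α → Bool))
    {q : ℝ≥0∞} (hP : ∀ T : Finset α, P {η | ∀ i ∈ T, η i = false} ≤ q ^ #T)
    (s : Finset α) (r : ℕ) :
    P (⋃ T ∈ s.powersetCard r, {η | ∀ i ∈ T, η i = false}) ≤ 2 ^ #s * q ^ r :=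
  calc _ ≤ ∑ T ∈ s.powersetCard r, P {η | ∀ i ∈ T, η i = false} := measure_biUnion_finset_le _ _
    _ ≤ ∑ T ∈ s.powersetCard r, q ^ r :=
      sum_le_sum fun T hT => (hP T).trans_eq (by rw [(mem_powersetCard.mp hT).2])
    _ ≤ 2 ^ #s * q ^ r := by
      rw [sum_const, nsmul_eq_mul, card_powersetCard]
      gcongr
      exact_mod_cast Nat.choose_le_two_pow _ _

namespace SimpleGraph

variable {V : Type*} {G : SimpleGraph V}

theorem exists_isPath_of_chain {m : ℕ} (π : Fin (m + 1) → V)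
    (hπ : ∀ j : Fin m, π j.castSucc = π j.succ ∨ G.Adj (π j.castSucc) (π j.succ)) :
    ∃ w : G.Walk (π 0) (π (Fin.last m)), w.IsPath ∧ ∀ v ∈ w.support, v ∈ Set.range π := by
  classical
  let π' : Fin (m + 1) → Set.range π := fun j => ⟨π j, j, rfl⟩
  have hreach : ∀ j, (G.induce (Set.range π)).Reachable (π' 0) (π' j) := by
    refine Fin.induction .rfl fun j ih => ih.trans ?_
    rcases hπ j with h | h
    · rw [show π' j.castSucc = π' j.succ from Subtype.ext h]
    · exact Adj.reachable h
  obtain ⟨p⟩ := hreach (Fin.last m)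
  let f := (Embedding.induce (G := G) (Set.range π)).toHom
  have hsupp : ∀ v ∈ (p.bypass.map f).support, v ∈ Set.range π := by
    intro v hv
    rw [Walk.support_map, List.mem_map] at hv
    obtain ⟨u, -, rfl⟩ := hv
    exact u.2
  exact ⟨p.bypass.map f, p.bypass_isPath.map Subtype.val_injective, hsupp⟩

variable {S : Type*} {step : V → S → V}

theorem Walk.exists_support_eq_scanl (hstep : ∀ a b, G.Adj a b → ∃ s, step a s = b) {u v : V}
    (w : G.Walk u v) : ∃ l : List S, l.length = w.length ∧ w.support = l.scanl step u := by
  induction w with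
  | nil => exact ⟨[], rfl, rfl⟩
  | cons h _ ih =>
    obtain ⟨l, hl, hw⟩ := ih
    obtain ⟨s, hs⟩ := hstep _ _ h
    exact ⟨s :: l, by simp [hl], by simp [hs, hw]⟩

variable [DecidableEq V]

def falseMajorityWalks (G : SimpleGraph V) (u : V) (L : ℕ) : Set (V → Bool) :=
  {η | ∃ v, ∃ w : G.Walk u v, L ≤ w.length ∧
    w.length < 2 * #{i ∈ w.support.toFinset | η i = false}}

theorem falseMajorityWalks_subset (hstep : ∀ a b, G.Adj a b → ∃ s, step a s = b) (u : V)
    (L : ℕ) :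
    G.falseMajorityWalks u L ⊆
      ⋃ (k : ℕ) (l : List.Vector S (L + k)),
        ⋃ T ∈ (l.toList.scanl step u).toFinset.powersetCard ((L + k) / 2 + 1),
          {η | ∀ i ∈ T, η i = false} := by
  rintro η ⟨v, w, hL, hfalse⟩
  obtain ⟨l, hl, hw⟩ := w.exists_support_eq_scanl hstep
  obtain ⟨k, hk⟩ := Nat.exists_eq_add_of_le hL
  obtain ⟨T, hTsub, hTcard⟩ :=
    exists_subset_card_eq (s := {i ∈ w.support.toFinset | η i = false}) (n := (L + k) / 2 + 1)
      (by omega)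
  simp only [Set.mem_iUnion]
  refine ⟨k, ⟨l, hl.trans hk⟩, T, ?_, fun i hi => (mem_filter.mp (hTsub hi)).2⟩
  refine mem_powersetCard.mpr ⟨fun i hi => ?_, hTcard⟩
  show i ∈ (l.scanl step u).toFinset
  exact hw ▸ (mem_filter.mp (hTsub hi)).1

theorem measure_falseMajorityWalks_le [Fintype S] [Nonempty S]
    (hstep : ∀ a b, G.Adj a b → ∃ s, step a s = b) (P : Measure (V → Bool)) {q : ℝ}
    (hq0 : 0 ≤ q) (hq : 16 * Fintype.card S ^ 2 * q ≤ 1)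
    (hP : ∀ T : Finset V, P {η | ∀ i ∈ T, η i = false} ≤ ENNReal.ofReal q ^ #T) (u : V)
    (L : ℕ) : P (G.falseMajorityWalks u L) ≤ 2 * 2⁻¹ ^ L := by
  have hterm (m : ℕ) :
      (Fintype.card S : ℝ≥0∞) ^ m * (2 ^ (m + 1) * ENNReal.ofReal q ^ (m / 2 + 1)) ≤ 2⁻¹ ^ m := by
    have := ENNReal.ofReal_le_ofReal (pow_mul_two_pow_mul_pow_half_le Fintype.card_pos hq0 hq m)
    rwa [ENNReal.ofReal_mul (by positivity), ENNReal.ofReal_mul (by positivity),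
      ENNReal.ofReal_pow (by positivity), ENNReal.ofReal_pow (by positivity),
      ENNReal.ofReal_pow hq0, ENNReal.ofReal_pow (by positivity), ENNReal.ofReal_natCast,
      ENNReal.ofReal_ofNat, ENNReal.ofReal_inv_of_pos two_pos, ENNReal.ofReal_ofNat,
      mul_assoc] at this
  have hpiece (m : ℕ) (l : List.Vector S m) :
      P (⋃ T ∈ (l.toList.scanl step u).toFinset.powersetCard (m / 2 + 1),
        {η | ∀ i ∈ T, η i = false}) ≤ 2 ^ (m + 1) * ENNReal.ofReal q ^ (m / 2 + 1) := by
    refine (measure_biUnion_powersetCard_le P hP _ _).trans ?_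
    gcongr
    · exact one_le_two
    · exact (List.toFinset_card_le _).trans (by simp)
  calc _ ≤ _ := measure_mono (falseMajorityWalks_subset hstep u L)
    _ ≤ ∑' k, ∑ l : List.Vector S (L + k),
          P (⋃ T ∈ (l.toList.scanl step u).toFinset.powersetCard ((L + k) / 2 + 1),
            {η | ∀ i ∈ T, η i = false}) :=
        (measure_iUnion_le _).trans (ENNReal.tsum_le_tsum fun k => measure_iUnion_fintype_le _ _)
    _ ≤ ∑' k, ∑ _l : List.Vector S (L + k),
          2 ^ (L + k + 1) * ENNReal.ofReal q ^ ((L + k) / 2 + 1) :=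
        ENNReal.tsum_le_tsum fun k => sum_le_sum fun l _ => hpiece _ l
    _ ≤ ∑' k, 2⁻¹ ^ (L + k) := ENNReal.tsum_le_tsum fun k => by
        simpa [card_vector] using hterm (L + k)
    _ = 2 * 2⁻¹ ^ L := by
        simp_rw [pow_add, ENNReal.tsum_mul_left, ENNReal.tsum_geometric, ENNReal.one_sub_inv_two,
          inv_inv, mul_comm]

end SimpleGraph

namespace FPP

variable {d N : ℕ}

theorem adjA_symm {x y : EvenLattice d} (h : adjA x y) : adjA y x :=
  ⟨h.1.symm, by simpa only [abs_sub_comm] using h.2⟩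

theorem adjXi_symm {a b : EvenLattice d × ZMod N} (h : adjXi a b) : adjXi b a := by
  rcases h with ⟨h1, h2 | h2⟩ | ⟨h1, h2⟩
  · exact .inl ⟨h1.symm, .inr (by simp [h2])⟩
  · exact .inl ⟨h1.symm, .inl (by simp [h2])⟩
  · exact .inr ⟨h1.symm, adjA_symm h2⟩

def xiGraph (d N : ℕ) : SimpleGraph (EvenLattice d × ZMod N) where
  Adj a b := a ≠ b ∧ adjXi a b
  symm := ⟨fun _ _ h => ⟨h.1.symm, adjXi_symm h.2⟩⟩

theorem sum_abs_sub_le_two_of_adjXi {a b : EvenLattice d × ZMod N} (h : adjXi a b) :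
    ∑ i, |b.1.1 i - a.1.1 i| ≤ 2 := by
  rcases h with ⟨h1, -⟩ | ⟨-, h2⟩
  · simp [h1]
  · simp only [abs_sub_comm, h2.2, le_refl]

theorem exists_time_shift_of_adjXi {a b : EvenLattice d × ZMod N} (h : adjXi a b) :
    ∃ t : ℤ, |t| ≤ 1 ∧ b.2 = a.2 + t := by
  rcases h with ⟨-, h2 | h2⟩ | ⟨h1, -⟩
  · exact ⟨1, by norm_num, by simp [h2]⟩
  · exact ⟨-1, by norm_num, by simp [h2, sub_eq_add_neg]⟩
  · exact ⟨0, by norm_num, by simp [h1]⟩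

theorem sum_abs_sub_le_two_mul_length {a b : EvenLattice d × ZMod N}
    (w : (xiGraph d N).Walk a b) : ∑ i, |b.1.1 i - a.1.1 i| ≤ 2 * w.length := by
  induction w with
  | nil => simp
  | @cons a c b h w ih =>
    have htri : ∑ i, |b.1.1 i - a.1.1 i| ≤
        ∑ i, |b.1.1 i - c.1.1 i| + ∑ i, |c.1.1 i - a.1.1 i| := by
      rw [← sum_add_distrib]
      exact sum_le_sum fun i _ => abs_sub_le _ _ _
    have := sum_abs_sub_le_two_of_adjXi h.2
    rw [SimpleGraph.Walk.length_cons]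
    push_cast
    linarith

/-- Every edge of `xiGraph d N` is one of these moves (`exists_move_eq`), which bounds the number
of walks of a given length uniformly in `N`. -/
abbrev Step (d : ℕ) := (Fin d → Set.Icc (-2 : ℤ) 2) × Set.Icc (-1 : ℤ) 1

instance : Nonempty (Step d) := ⟨(fun _ => ⟨0, by norm_num⟩, ⟨0, by norm_num⟩)⟩

def Step.move (a : EvenLattice d × ZMod N) (s : Step d) : EvenLattice d × ZMod N :=
  if h : Even (∑ i, (a.1.1 i + s.1 i)) then (⟨fun i => a.1.1 i + s.1 i, h⟩, a.2 + (s.2 : ℤ))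
  else a

theorem exists_move_eq {a b : EvenLattice d × ZMod N} (h : (xiGraph d N).Adj a b) :
    ∃ s : Step d, Step.move a s = b := by
  obtain ⟨t, ht, hbt⟩ := exists_time_shift_of_adjXi h.2
  have hv (i : Fin d) : |b.1.1 i - a.1.1 i| ≤ 2 :=
    (single_le_sum (fun j _ => abs_nonneg (b.1.1 j - a.1.1 j)) (mem_univ i)).trans
      (sum_abs_sub_le_two_of_adjXi h.2)
  refine ⟨(fun i => ⟨_, abs_le.mp (hv i)⟩, ⟨t, abs_le.mp ht⟩), ?_⟩
  simp only [Step.move, add_sub_cancel, dif_pos b.1.2]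
  exact Prod.ext (Subtype.ext rfl) hbt.symm

theorem exists_isPath_of_passageTime_lt {η : EvenLattice d × ZMod N → Bool} {x : EvenLattice d}
    {r : ℝ≥0∞} (h : passageTime η x < r) :
    ∃ w : (xiGraph d N).Walk (originA d, 0) (x, 0),
      w.IsPath ∧ (#{i ∈ w.support.toFinset | η i = true} : ℝ≥0∞) < r := by
  simp only [passageTime, iInf_lt_iff] at h
  obtain ⟨m, π, h0, hlast, hadj, hsum⟩ := h
  obtain ⟨w, hw, hsupp⟩ := (xiGraph d N).exists_isPath_of_chain π fun j =>
    (em _).imp_right fun hne => ⟨hne, hadj j⟩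
  refine ⟨w.copy h0 hlast, (SimpleGraph.Walk.isPath_copy _ _ _).mpr hw, hsum.trans_le' ?_⟩
  rw [sum_boole]
  gcongr
  intro v hv
  rw [SimpleGraph.Walk.support_copy, List.mem_toFinset] at hv
  obtain ⟨j, rfl⟩ := hsupp v hv
  exact mem_image_of_mem π (mem_univ j)

theorem setOf_passageTime_lt_subset (x : EvenLattice d) {n : ℕ} (hn : (n : ℤ) = ∑ i, |x.1 i|) :
    {η : EvenLattice d × ZMod N → Bool |
        passageTime η x < ENNReal.ofReal (1 / 4 * ((n : ℤ) : ℝ))} ⊆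
      (xiGraph d N).falseMajorityWalks (originA d, 0) ((n + 1) / 2) := by
  intro η hη
  obtain ⟨w, hw, htrue⟩ := exists_isPath_of_passageTime_lt hη
  have hlength : n ≤ 2 * w.length := by
    have := sum_abs_sub_le_two_mul_length w
    simp only [originA, sub_zero, ← hn] at this
    exact_mod_cast this
  have htrue' : 4 * #{i ∈ w.support.toFinset | η i = true} < n := by
    rw [ENNReal.natCast_lt_ofReal, Int.cast_natCast] at htrue
    exact_mod_cast (by linarith : (4 * #{i ∈ w.support.toFinset | η i = true} : ℝ) < n)
  have hcount := card_filter_eq_true_add_card_filter_eq_false w.support.toFinset η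
  rw [List.toFinset_card_of_nodup hw.support_nodup, SimpleGraph.Walk.length_support] at hcount
  exact ⟨_, w, by omega, by omega⟩

end FPP

theorem fpp_passage_time_decay_general (d : ℕ) :
    ∃ κ : ℝ, 0 < κ ∧
      ∀ p : ℝ, 1 - κ < p → p ≤ 1 →
        ∃ φ c₁ c₂ : ℝ, 0 < φ ∧ 0 < c₁ ∧ 0 < c₂ ∧
          ∀ N : ℕ, 1 ≤ N →
            ∀ P : Measure ((EvenLattice d × ZMod N) → Bool), IsProbabilityMeasure P →
              (∀ (s : Finset (EvenLattice d × ZMod N)) (b : EvenLattice d × ZMod N → Bool),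
                P {η | ∀ i ∈ s, η i = b i}
                  = ∏ i ∈ s, if b i then ENNReal.ofReal p else ENNReal.ofReal (1 - p)) →
              ∀ x : EvenLattice d,
                P {η | passageTime η x
                      < ENNReal.ofReal (φ * ((∑ i, |x.1 i| : ℤ) : ℝ))}
                  ≤ ENNReal.ofReal (c₁ * Real.exp (-c₂ * ((∑ i, |x.1 i| : ℤ) : ℝ))) := by
  refine ⟨(16 * Fintype.card (FPP.Step d) ^ 2 : ℝ)⁻¹, by positivity, fun p hp hp1 => ?_⟩
  refine ⟨1 / 4, 2, Real.log 2 / 2, by norm_num, two_pos, by positivity, fun N _ P _ hP x => ?_⟩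
  lift ∑ i, |x.1 i| to ℕ using sum_nonneg fun i _ => abs_nonneg _ with n hn
  have hfalse (T : Finset (EvenLattice d × ZMod N)) :
      P {η | ∀ i ∈ T, η i = false} ≤ ENNReal.ofReal (1 - p) ^ #T :=
    (hP T fun _ => false).le.trans_eq (by simp)
  have hq : 16 * Fintype.card (FPP.Step d) ^ 2 * (1 - p) ≤ 1 := by
    rw [← le_div_iff₀' (by positivity), one_div]
    linarith
  calc _ ≤ _ := measure_mono (FPP.setOf_passageTime_lt_subset x hn)
    _ ≤ 2 * 2⁻¹ ^ ((n + 1) / 2) :=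
      SimpleGraph.measure_falseMajorityWalks_le (fun _ _ => FPP.exists_move_eq) P (by linarith)
        hq hfalse _ _
    _ ≤ _ := two_mul_inv_two_pow_le_ofReal_exp <| by
      rw [Int.cast_natCast]
      exact_mod_cast (by omega : n ≤ 2 * ((n + 1) / 2))

/-- there is `κ > 0` (depending only on `d`) such that for every `p > 1 − κ`
there are `φ, c₁, c₂ > 0` (depending only on `p` and `d`) such that, uniformly in `N ≥ 1`,
for i.i.d. Bernoulli(`p`) site variables `η` on `Ξ = A × ℤ/Nℤ`,
`P(T(x) < φ‖x‖₁) ≤ c₁ e^{−c₂ ‖x‖₁}` for every `x ∈ A`. -/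
theorem fpp_passage_time_decay (d : ℕ) (hd : 1 ≤ d) :
    ∃ κ : ℝ, 0 < κ ∧
      ∀ p : ℝ, 1 - κ < p → p ≤ 1 →
        ∃ φ c₁ c₂ : ℝ, 0 < φ ∧ 0 < c₁ ∧ 0 < c₂ ∧
          ∀ N : ℕ, 1 ≤ N →
            ∀ P : Measure ((EvenLattice d × ZMod N) → Bool), IsProbabilityMeasure P →
              (∀ (s : Finset (EvenLattice d × ZMod N)) (b : EvenLattice d × ZMod N → Bool),
                P {η | ∀ i ∈ s, η i = b i}
                  = ∏ i ∈ s, if b i then ENNReal.ofReal p else ENNReal.ofReal (1 - p)) →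
              ∀ x : EvenLattice d,
                P {η | passageTime η x
                      < ENNReal.ofReal (φ * ((∑ i, |x.1 i| : ℤ) : ℝ))}
                  ≤ ENNReal.ofReal (c₁ * Real.exp (-c₂ * ((∑ i, |x.1 i| : ℤ) : ℝ))) :=
  fpp_passage_time_decay_general d
end
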